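/- arXiv:2312.03529 — 2 statements merged into one kernel-verified Lean document; each statement's English description precedes it below -/
import Mathlib

section
/- The quotient space of the free sum of two copies of the Michael line obtained by identifying corresponding rational points does not have a Gδ-diagonal; in particular, it is not submetrizable. -/
def Submetrizable (X : Type*) [t : TopologicalSpace X] : Prop :=
  ∃ σ : TopologicalSpace X, t ≤ σ ∧ @TopologicalSpace.MetrizableSpace X σ

/-- The topology of the Michael line: generated by the Euclidean open sets together with all
sets of irrational numbers. -/
def michaelTopology : TopologicalSpace ℝ :=
  TopologicalSpace.generateFrom
    ({U : Set ℝ | IsOpen U} ∪ {K : Set ℝ | ∀ x ∈ K, Irrational x})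

/-- The free sum of two copies of the Michael line, as `Bool × ℝ` with the product of the
discrete topology and the Michael topology. -/
def twoMichael : TopologicalSpace (Bool × ℝ) :=
  @instTopologicalSpaceProd Bool ℝ ⊥ michaelTopology

/-- The identification of the two copies of each rational point. -/
def michaelRel : Bool × ℝ → Bool × ℝ → Prop :=
  fun a b => a.2 = b.2 ∧ ∃ q : ℚ, a.2 = (q : ℝ)

/-- The quotient of the free sum of two Michael lines identifying corresponding rationals. -/
def PopovSpace : Type := Quot michaelRel

/-- Its quotient topology. -/
def popovTopology : TopologicalSpace PopovSpace :=
  twoMichael.coinduced (Quot.mk michaelRel)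

/-!
At a rational point the Michael line has its Euclidean neighbourhoods, so the two maps
`x ↦ ⟨0, x⟩` and `x ↦ ⟨1, x⟩` from the Euclidean line into the quotient are continuous at every
rational and agree there. If the diagonal were a countable intersection of open sets, pulling it
back along `x ↦ (⟨0, x⟩, ⟨1, x⟩)` would give a countable intersection of open sets containing all
rationals, hence a residual set. The irrationals are residual too, so by Baire the two sets meet,
but the two maps differ at every irrational.
-/

open Set Filter Topology

theorem IsGδ.preimage_mem_residual {X Y : Type*} [TopologicalSpace X] [TopologicalSpace Y]
    {s : Set Y} (hs : IsGδ s) {f : X → Y} {D : Set X} (hD : Dense D)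
    (hf : ∀ x ∈ D, ContinuousAt f x) (hfD : MapsTo f D s) : f ⁻¹' s ∈ residual X := by
  obtain ⟨T, hTo, hTc, rfl⟩ := hs
  rw [preimage_sInter]
  refine (countable_bInter_mem hTc).2 fun t ht => ?_
  have hDt : D ⊆ interior (f ⁻¹' t) := fun x hx =>
    mem_interior_iff_mem_nhds.2 <| hf x hx <| (hTo t ht).mem_nhds <| mem_sInter.1 (hfD hx) t ht
  exact mem_of_superset (residual_of_dense_open isOpen_interior (hD.mono hDt)) interior_subset

theorem Submetrizable.isGδ_diagonal {X : Type*} [t : TopologicalSpace X] (h : Submetrizable X) :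
    IsGδ (diagonal X) := by
  obtain ⟨σ, hle, hσ⟩ := h
  have hσΔ : @IsGδ _ (@instTopologicalSpaceProd X X σ σ) (diagonal X) :=
    isClosed_diagonal.isGδ
  exact @IsGδ.preimage _ _ (@instTopologicalSpaceProd X X t t) (@instTopologicalSpaceProd X X σ σ)
    (Prod.map id id) _
    (@Continuous.prodMap X X X X σ σ t t id id (continuous_id_of_le hle)
      (continuous_id_of_le hle)) hσΔ

theorem nhds_le_nhds_michaelTopology {x : ℝ} (hx : ¬ Irrational x) :
    𝓝 x ≤ @nhds ℝ michaelTopology x := by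
  rw [michaelTopology, TopologicalSpace.nhds_generateFrom]
  refine le_iInf₂ fun s ⟨hxs, hs⟩ => ?_
  rcases hs with hs | hs
  · exact le_principal_iff.2 (IsOpen.mem_nhds hs hxs)
  · exact absurd (hs x hxs) hx

section PopovSpace

attribute [local instance] popovTopology

def popovPoint (b : Bool) (x : ℝ) : PopovSpace :=
  Quot.mk michaelRel (b, x)

theorem continuousAt_popovPoint (b : Bool) {x : ℝ} (hx : ¬ Irrational x) :
    ContinuousAt (popovPoint b) x := by
  have hmk : Continuous[twoMichael, popovTopology] (Quot.mk michaelRel) :=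
    continuous_coinduced_rng
  have hpair : Tendsto (fun y : ℝ => (b, y)) (𝓝 x) (@nhds _ twoMichael (b, x)) := by
    rw [twoMichael, @nhds_prod_eq Bool ℝ ⊥ michaelTopology]
    exact (tendsto_const_nhds : Tendsto _ _ (@nhds Bool ⊥ b)).prodMk
      (nhds_le_nhds_michaelTopology hx)
  exact (@Continuous.tendsto _ _ twoMichael _ _ hmk (b, x)).comp hpair

theorem popovPoint_false_eq_true (q : ℚ) : popovPoint false q = popovPoint true q :=
  Quot.sound ⟨rfl, q, rfl⟩

theorem popovPoint_false_ne_true {x : ℝ} (hx : Irrational x) :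
    popovPoint false x ≠ popovPoint true x := by
  -- `b ∧ x ∉ ℚ` is constant on classes, and separates the two copies of an irrational point.
  let onIrrationalTrueCopy : PopovSpace → Prop :=
    Quot.lift (fun a => a.1 ∧ Irrational a.2) <| by
      rintro ⟨_, _⟩ ⟨_, _⟩ ⟨rfl, q, rfl⟩
      simp [q.not_irrational]
  intro h
  simpa [popovPoint, onIrrationalTrueCopy, hx] using congrArg onIrrationalTrueCopy h

theorem not_isGδ_diagonal_popovSpace : ¬ IsGδ (diagonal PopovSpace) := by
  intro hΔ
  have hres : (fun x => (popovPoint false x, popovPoint true x)) ⁻¹' diagonal PopovSpace ∈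
      residual ℝ := by
    refine hΔ.preimage_mem_residual Rat.denseRange_cast ?_ ?_
    · rintro _ ⟨q, rfl⟩
      exact (continuousAt_popovPoint false q.not_irrational).prodMk
        (continuousAt_popovPoint true q.not_irrational)
    · rintro _ ⟨q, rfl⟩
      exact popovPoint_false_eq_true q
  obtain ⟨x, hxeq, hxirr⟩ :=
    (dense_of_mem_residual (inter_mem hres eventually_residual_irrational)).nonempty
  exact popovPoint_false_ne_true hxirr hxeq

end PopovSpace

/-- The quotient of two copies of the Michael line identifying corresponding rational points
does not have a Gδ-diagonal; in particular it is not submetrizable. -/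
theorem popovSpace_no_gdelta_diagonal :
    ¬ @IsGδ (PopovSpace × PopovSpace)
        (@instTopologicalSpaceProd PopovSpace PopovSpace popovTopology popovTopology)
        (Set.diagonal PopovSpace) ∧
    ¬ @Submetrizable PopovSpace popovTopology :=
  ⟨not_isGδ_diagonal_popovSpace, fun h =>
    not_isGδ_diagonal_popovSpace (@Submetrizable.isGδ_diagonal _ popovTopology h)⟩
end

section
/- If f : X → Y is a closed continuous surjection and 𝔇 is a discrete family of subsets of X, then {f[D] : D ∈ 𝔇} is a hereditarily closure-preserving family in Y. -/
universe u v

/-- A family of subsets is discrete if every point has a neighbourhood meeting at most one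
member of the family. -/
def DiscreteFamily {X : Type u} [TopologicalSpace X] (𝔇 : Set (Set X)) : Prop :=
  ∀ x : X, ∃ V ∈ nhds x, {D ∈ 𝔇 | (D ∩ V).Nonempty}.Subsingleton

/-- A family `𝔉` is hereditarily closure-preserving if for every subfamily and every choice of
subsets of its members, the closure of the union is the union of the closures. -/
def HCP {Y : Type v} [TopologicalSpace Y] (𝔉 : Set (Set Y)) : Prop :=
  ∀ G ⊆ 𝔉, ∀ B : Set Y → Set Y, (∀ F ∈ G, B F ⊆ F) →
    closure (⋃ F ∈ G, B F) = ⋃ F ∈ G, closure (B F)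

/-!
Choose for each member `F` of the subfamily some `D_F ∈ 𝔇` with `F = f '' D_F`, and replace the
chosen `B F ⊆ F` by its trace `D_F ∩ f⁻¹(B F)`, which `f` maps onto `B F`. Distinct `F` give
distinct `D_F`, so these traces form a locally finite family in `X`, hence a closure-preserving
one; a closed continuous map commutes with closures and carries this over to the sets `B F`.
-/

open Set

theorem DiscreteFamily.locallyFinite {X : Type u} [TopologicalSpace X] {𝔇 : Set (Set X)}
    (h𝔇 : DiscreteFamily 𝔇) {ι : Type*} {D : ι → Set X} (hD : ∀ i, D i ∈ 𝔇)
    (hinj : Function.Injective D) : LocallyFinite D := by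
  intro x
  obtain ⟨V, hV, hsub⟩ := h𝔇 x
  refine ⟨V, hV, Subsingleton.finite fun i hi j hj => hinj ?_⟩
  exact hsub ⟨hD i, hi⟩ ⟨hD j, hj⟩

theorem LocallyFinite.closure_iUnion_image {X : Type u} {Y : Type v}
    [TopologicalSpace X] [TopologicalSpace Y] {f : X → Y} (hf : Continuous f)
    (hclosed : IsClosedMap f) {ι : Type*} {A : ι → Set X} (hA : LocallyFinite A) :
    closure (⋃ i, f '' A i) = ⋃ i, closure (f '' A i) := by
  simp only [← image_iUnion, hclosed.closure_image_eq_of_continuous hf, hA.closure_iUnion]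

theorem hcp_image_of_discreteFamily_general {X : Type u} {Y : Type v}
    [TopologicalSpace X] [TopologicalSpace Y]
    (f : X → Y) (hf : Continuous f)
    (hclosed : IsClosedMap f)
    (𝔇 : Set (Set X)) (hdisc : DiscreteFamily 𝔇) :
    HCP {S : Set Y | ∃ D ∈ 𝔇, S = f '' D} := by
  intro G hG B hB
  choose D hD𝔇 hDF using fun F : G => hG F.2
  have hinj : Function.Injective D := fun F F' h => Subtype.ext (by rw [hDF, hDF, h])
  have himage : ∀ F : G, f '' (D F ∩ f ⁻¹' B F) = B F := fun F => by
    rw [image_inter_preimage, ← hDF, inter_eq_right.mpr (hB F F.2)]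
  have hA : LocallyFinite fun F : G => D F ∩ f ⁻¹' B F :=
    (hdisc.locallyFinite hD𝔇 hinj).subset fun _ => inter_subset_left
  simpa only [biUnion_eq_iUnion, himage] using hA.closure_iUnion_image hf hclosed

/-- Closed continuous surjections send discrete families to hereditarily closure-preserving
families. -/
theorem hcp_image_of_discreteFamily {X : Type u} {Y : Type v}
    [TopologicalSpace X] [TopologicalSpace Y]
    (f : X → Y) (hf : Continuous f) (hsurj : Function.Surjective f)
    (hclosed : IsClosedMap f)
    (𝔇 : Set (Set X)) (hdisc : DiscreteFamily 𝔇) :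
    HCP {S : Set Y | ∃ D ∈ 𝔇, S = f '' D} :=
  hcp_image_of_discreteFamily_general f hf hclosed 𝔇 hdisc
end
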